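/- arXiv:2512.24115 — 7 statements merged into one kernel-verified Lean document; each statement's English description precedes it below -/
import Mathlib

section
/- If G is a sun graph obtained from a cycle C_n (n ≥ 3) by attaching one pendant leaf to each cycle vertex (so G has 2n vertices), then γ(G) = n and ζ(G) = 2^n. -/
open Finset SimpleGraph

/-- `S` is a dominating set of `G`: every vertex outside `S` has a neighbor in `S`. -/
def domSet {V : Type*} (G : SimpleGraph V) (S : Finset V) : Prop :=
  ∀ v, v ∉ S → ∃ u ∈ S, G.Adj u v

/-- The domination number `γ(G)`: least cardinality of a dominating set. -/
noncomputable def domNum {V : Type*} [Fintype V] (G : SimpleGraph V) : ℕ :=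
  sInf {k | ∃ S : Finset V, domSet G S ∧ S.card = k}

/-- The dominion `ζ(G)`: the number of dominating sets of minimum cardinality. -/
noncomputable def dominion {V : Type*} [Fintype V] (G : SimpleGraph V) : ℕ :=
  Nat.card {S : Finset V // domSet G S ∧ S.card = domNum G}

/-- The sun graph on `2n` vertices: a cycle `inl 0 - inl 1 - ⋯ - inl (n-1) - inl 0`
with a pendant leaf `inr i` attached to each cycle vertex `inl i`. -/
def sunGraph (n : ℕ) : SimpleGraph (Fin n ⊕ Fin n) :=
  SimpleGraph.fromRel (fun a b =>
    (∃ i j : Fin n, a = Sum.inl i ∧ b = Sum.inl j ∧ ((i : ℕ) + 1) % n = (j : ℕ)) ∨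
    (∃ i : Fin n, a = Sum.inl i ∧ b = Sum.inr i))

lemma sun_adj_inr {n : ℕ} (u : Fin n ⊕ Fin n) (i : Fin n) :
    (sunGraph n).Adj u (Sum.inr i) ↔ u = Sum.inl i := by
  constructor
  · rintro ⟨hne, h | h⟩ <;>
      rcases h with ⟨j, k, h1, h2, h3⟩ | ⟨j, h1, h2⟩ <;> simp_all
  · rintro rfl
    exact ⟨by simp, Or.inl (Or.inr ⟨i, rfl, rfl⟩)⟩

/-- pick one element of each pair from a dominating set -/
noncomputable def pick {n : ℕ} (S : Finset (Fin n ⊕ Fin n)) (i : Fin n) : Fin n ⊕ Fin n :=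
  if Sum.inl i ∈ S then Sum.inl i else Sum.inr i

lemma pick_inj {n : ℕ} (S : Finset (Fin n ⊕ Fin n)) : Function.Injective (pick S) := by
  intro i j h
  unfold pick at h
  split_ifs at h <;> simp_all

lemma pick_mem {n : ℕ} {S : Finset (Fin n ⊕ Fin n)} (hS : domSet (sunGraph n) S) (i : Fin n) :
    pick S i ∈ S := by
  unfold pick
  split_ifs with h
  · exact h
  · by_contra hr
    obtain ⟨u, hu, hadj⟩ := hS (Sum.inr i) hr
    rw [sun_adj_inr] at hadj
    exact h (hadj ▸ hu)

lemma card_ge {n : ℕ} {S : Finset (Fin n ⊕ Fin n)} (hS : domSet (sunGraph n) S) :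
    n ≤ S.card := by
  calc n = (Finset.univ : Finset (Fin n)).card := by simp
    _ ≤ S.card := Finset.card_le_card_of_injOn (pick S)
        (fun i _ => pick_mem hS i) ((pick_inj S).injOn)

lemma char_iff {n : ℕ} (S : Finset (Fin n ⊕ Fin n)) :
    (domSet (sunGraph n) S ∧ S.card = n) ↔ ∀ i, (Sum.inl i ∈ S ↔ Sum.inr i ∉ S) := by
  constructor
  · rintro ⟨hS, hc⟩ i
    constructor
    · intro hl hr
      -- both in S: contradiction with card = n
      have hsub : insert (Sum.inr i) (Finset.univ.image (pick S)) ⊆ S := by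
        intro x hx
        rcases Finset.mem_insert.mp hx with rfl | hx
        · exact hr
        · obtain ⟨j, _, rfl⟩ := Finset.mem_image.mp hx
          exact pick_mem hS j
      have hni : Sum.inr i ∉ Finset.univ.image (pick S) := by
        simp only [Finset.mem_image, not_exists]
        rintro j ⟨-, hj⟩
        unfold pick at hj
        by_cases h : Sum.inl j ∈ S
        · simp [h] at hj
        · simp [h] at hj
          subst hj
          exact h hl
      have : n + 1 ≤ S.card := by
        calc n + 1 = (insert (Sum.inr i) (Finset.univ.image (pick S))).card := by
              rw [Finset.card_insert_of_notMem hni,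
                Finset.card_image_of_injective _ (pick_inj S)]
              simp
          _ ≤ S.card := Finset.card_le_card hsub
      omega
    · intro hr
      by_contra hl
      obtain ⟨u, hu, hadj⟩ := hS (Sum.inr i) hr
      rw [sun_adj_inr] at hadj
      exact hl (hadj ▸ hu)
  · intro h
    have hS : domSet (sunGraph n) S := by
      rintro (i | i) hv
      · refine ⟨Sum.inr i, ?_, ((sun_adj_inr (Sum.inl i) i).mpr rfl).symm⟩
        exact not_not.mp (fun hr => hv ((h i).mpr hr))
      · exact ⟨Sum.inl i, (h i).mpr hv, (sun_adj_inr _ _).mpr rfl⟩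
    have hcard : S = Finset.univ.image (pick S) := by
      apply Finset.Subset.antisymm
      · rintro (i | i) hx
        · exact Finset.mem_image.mpr ⟨i, Finset.mem_univ i, by simp [pick, hx]⟩
        · refine Finset.mem_image.mpr ⟨i, Finset.mem_univ i, ?_⟩
          have hl : Sum.inl i ∉ S := fun hl => ((h i).mp hl) hx
          simp [pick, hl]
      · intro x hx
        obtain ⟨j, -, rfl⟩ := Finset.mem_image.mp hx
        exact pick_mem hS j
    exact ⟨hS, by rw [hcard, Finset.card_image_of_injective _ (pick_inj S)]; simp⟩

lemma domNum_sun (n : ℕ) : domNum (sunGraph n) = n := by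
  have hchar := (char_iff (Finset.univ.image (Sum.inl : Fin n → Fin n ⊕ Fin n))).mpr (by simp)
  apply le_antisymm
  · exact Nat.sInf_le ⟨_, hchar.1, hchar.2⟩
  · refine le_csInf ⟨n, ⟨_, hchar.1, hchar.2⟩⟩ ?_
    rintro k ⟨S, hS, rfl⟩
    exact card_ge hS

lemma inl_mem_img {n : ℕ} (f : Fin n → Bool) (i : Fin n) :
    Sum.inl i ∈ Finset.univ.image
      (fun j => if f j then (Sum.inl j : Fin n ⊕ Fin n) else Sum.inr j) ↔ f i := by
  simp only [Finset.mem_image, Finset.mem_univ, true_and]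
  constructor
  · rintro ⟨j, hj⟩
    by_cases h : f j
    · simp [h] at hj; exact hj ▸ h
    · simp [h] at hj
  · intro h; exact ⟨i, by simp [h]⟩

lemma inr_mem_img {n : ℕ} (f : Fin n → Bool) (i : Fin n) :
    Sum.inr i ∈ Finset.univ.image
      (fun j => if f j then (Sum.inl j : Fin n ⊕ Fin n) else Sum.inr j) ↔ ¬ f i := by
  simp only [Finset.mem_image, Finset.mem_univ, true_and]
  constructor
  · rintro ⟨j, hj⟩
    by_cases h : f j
    · simp [h] at hj
    · simp [h] at hj; exact hj ▸ h
  · intro h; exact ⟨i, by simp [h]⟩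

lemma dominion_sun (n : ℕ) : dominion (sunGraph n) = 2 ^ n := by
  have key : ∀ f : Fin n → Bool,
      domSet (sunGraph n) (Finset.univ.image
        (fun j => if f j then (Sum.inl j : Fin n ⊕ Fin n) else Sum.inr j)) ∧
      (Finset.univ.image
        (fun j => if f j then (Sum.inl j : Fin n ⊕ Fin n) else Sum.inr j)).card
        = domNum (sunGraph n) := by
    intro f
    rw [domNum_sun]
    exact (char_iff _).mpr (fun i => by rw [inl_mem_img, inr_mem_img, not_not])
  set F : (Fin n → Bool) →
      {S : Finset (Fin n ⊕ Fin n) // domSet (sunGraph n) S ∧ S.card = domNum (sunGraph n)} :=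
    fun f => ⟨_, key f⟩ with hF
  have hbij : Function.Bijective F := by
    constructor
    · intro f g hfg
      have := congrArg Subtype.val hfg
      funext i
      have h1 : (f i : Prop) ↔ (g i : Prop) := by
        rw [← inl_mem_img f i, ← inl_mem_img g i]
        exact iff_of_eq (congrArg (fun T => Sum.inl i ∈ T) this)
      rcases Bool.dichotomy (f i) with h | h <;> rcases Bool.dichotomy (g i) with h' | h' <;>
        simp_all
    · rintro ⟨S, hS⟩
      have hc := (char_iff S).mp ⟨hS.1, hS.2.trans (domNum_sun n)⟩
      refine ⟨fun i => decide (Sum.inl i ∈ S), Subtype.ext ?_⟩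
      ext x
      rcases x with i | i
      · rw [inl_mem_img]; simp
      · rw [inr_mem_img]
        simp only [decide_eq_true_eq]
        exact (not_iff_not.mpr (hc i)).trans not_not
  rw [dominion, Nat.card_eq_of_bijective F hbij |>.symm]
  simp [Nat.card_eq_fintype_card]

theorem stmt2 (n : ℕ) (hn : 3 ≤ n) :
    domNum (sunGraph n) = n ∧ dominion (sunGraph n) = 2 ^ n :=
  ⟨domNum_sun n, dominion_sun n⟩
end

section
/- If n = 3k with k ≥ 1, then the path P_n has exactly one minimum dominating set, namely {v_2, v_5, ..., v_{3k-1}}; hence ζ(P_{3k}) = 1. -/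
open Finset SimpleGraph

private lemma aux_dom (k : ℕ) (hk : 1 ≤ k) :
    domSet (pathGraph (3*k)) (Finset.univ.filter (fun i : Fin (3*k) => (i : ℕ) % 3 = 1)) := by
  intro v hv
  simp only [Finset.mem_filter, Finset.mem_univ, true_and] at hv
  have hvlt := v.isLt
  rcases (by omega : (v : ℕ) % 3 = 0 ∨ (v : ℕ) % 3 = 2) with h0 | h2
  · refine ⟨⟨(v : ℕ) + 1, by omega⟩, ?_, ?_⟩
    · simp only [Finset.mem_filter, Finset.mem_univ, true_and]; omega
    · rw [pathGraph_adj]; right; simp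
  · refine ⟨⟨(v : ℕ) - 1, by omega⟩, ?_, ?_⟩
    · simp only [Finset.mem_filter, Finset.mem_univ, true_and]; omega
    · rw [pathGraph_adj]; left; simp; omega

private lemma aux_card (k : ℕ) :
    (Finset.univ.filter (fun i : Fin (3*k) => (i : ℕ) % 3 = 1)).card = k := by
  have he : Finset.univ.filter (fun i : Fin (3*k) => (i : ℕ) % 3 = 1)
      = Finset.univ.image (fun j : Fin k => (⟨3*(j:ℕ)+1, by omega⟩ : Fin (3*k))) := by
    ext i
    simp only [Finset.mem_filter, Finset.mem_univ, true_and, Finset.mem_image]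
    constructor
    · intro h
      have hi := i.isLt
      exact ⟨⟨(i:ℕ)/3, by omega⟩, by apply Fin.ext; simp; omega⟩
    · rintro ⟨j, _, rfl⟩; simp
  rw [he, Finset.card_image_of_injective _ ?_, Finset.card_univ, Fintype.card_fin]
  intro a b h
  apply Fin.ext
  have := Fin.ext_iff.mp h
  simp at this
  omega

private lemma aux_img (k : ℕ) (S : Finset (Fin (3*k)))
    (hd : domSet (pathGraph (3*k)) S) :
    S.image (fun i : Fin (3*k) => (i : ℕ) / 3) = Finset.range k := by
  ext j
  simp only [Finset.mem_image, Finset.mem_range]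
  constructor
  · rintro ⟨i, _, rfl⟩
    have := i.isLt; omega
  · intro hj
    by_cases h : (⟨3*j+1, by omega⟩ : Fin (3*k)) ∈ S
    · exact ⟨_, h, by simp; omega⟩
    · obtain ⟨u, hu, hadj⟩ := hd _ h
      rw [pathGraph_adj] at hadj
      refine ⟨u, hu, ?_⟩
      simp at hadj
      omega

private lemma aux_lb (k : ℕ) (S : Finset (Fin (3*k)))
    (hd : domSet (pathGraph (3*k)) S) : k ≤ S.card := by
  have h1 : (S.image (fun i : Fin (3*k) => (i : ℕ) / 3)).card ≤ S.card :=
    Finset.card_image_le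
  rw [aux_img k S hd, Finset.card_range] at h1
  exact h1

private lemma aux_unique (k : ℕ) (hk : 1 ≤ k) (S : Finset (Fin (3*k)))
    (hd : domSet (pathGraph (3*k)) S) (hc : S.card = k) :
    S = Finset.univ.filter (fun i : Fin (3*k) => (i : ℕ) % 3 = 1) := by
  -- injectivity of the block map on S
  have hinj : Set.InjOn (fun i : Fin (3*k) => (i : ℕ) / 3) ↑S := by
    apply Finset.injOn_of_card_image_eq
    rw [aux_img k S hd, Finset.card_range, hc]
  set P : ℕ → Prop := fun m => ∃ h : m < 3*k, (⟨m, h⟩ : Fin (3*k)) ∈ S with hP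
  have inj : ∀ a b, P a → P b → a / 3 = b / 3 → a = b := by
    rintro a b ⟨ha, hma⟩ ⟨hb, hmb⟩ hdiv
    have := hinj (by simpa using hma) (by simpa using hmb) hdiv
    exact Fin.mk.inj_iff.mp this
  have surj : ∀ j < k, ∃ m, P m ∧ m / 3 = j := by
    intro j hj
    have : j ∈ S.image (fun i : Fin (3*k) => (i : ℕ) / 3) := by
      rw [aux_img k S hd]; exact Finset.mem_range.mpr hj
    obtain ⟨i, hi, hij⟩ := Finset.mem_image.mp this
    exact ⟨(i : ℕ), ⟨i.isLt, by simpa using hi⟩, hij⟩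
  have dom' : ∀ v, v < 3*k → ¬ P v → ∃ u, P u ∧ (u + 1 = v ∨ v + 1 = u) := by
    intro v hv hPv
    have hvS : (⟨v, hv⟩ : Fin (3*k)) ∉ S := fun h => hPv ⟨hv, h⟩
    obtain ⟨u, hu, hadj⟩ := hd _ hvS
    rw [pathGraph_adj] at hadj
    exact ⟨(u : ℕ), ⟨u.isLt, by simpa using hu⟩, by simpa using hadj⟩
  -- no vertex ≡ 2 (mod 3) in each block
  have asc : ∀ j, j < k → ¬ P (3*j + 2) := by
    intro j
    induction j with
    | zero =>
      intro hj hP2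
      have h0 : ¬ P 0 := fun h => by have := inj 0 2 h hP2 (by norm_num); omega
      obtain ⟨u, hPu, hadj⟩ := dom' 0 (by omega) h0
      have hu1 : u = 1 := by omega
      subst hu1
      have := inj 1 2 hPu hP2 (by norm_num); omega
    | succ j ih =>
      intro hj hP
      have hnP3 : ¬ P (3*j + 3) := fun h => by
        have := inj (3*j+3) (3*(j+1)+2) h hP (by omega); omega
      obtain ⟨u, hPu, hadj⟩ := dom' (3*j+3) (by omega) hnP3
      rcases (by omega : u = 3*j + 2 ∨ u = 3*j + 4) with h | h
      · exact ih (by omega) (h ▸ hPu)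
      · have := inj (3*j+4) (3*(j+1)+2) (h ▸ hPu) hP (by omega); omega
  -- no vertex ≡ 0 (mod 3) in each block
  have desc : ∀ d j, j < k → j + d = k - 1 → ¬ P (3*j) := by
    intro d
    induction d with
    | zero =>
      intro j hj hjd hP
      have hn2 : ¬ P (3*j + 2) := fun h => by
        have := inj (3*j+2) (3*j) h hP (by omega); omega
      obtain ⟨u, hPu, hadj⟩ := dom' (3*j+2) (by omega) hn2
      obtain ⟨hult, hmem⟩ := hPu
      have hu : u = 3*j + 1 := by omega
      subst hu
      have := inj (3*j+1) (3*j) ⟨hult, hmem⟩ hP (by omega); omega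
    | succ d ih =>
      intro j hj hjd hP
      have hn2 : ¬ P (3*j + 2) := fun h => by
        have := inj (3*j+2) (3*j) h hP (by omega); omega
      obtain ⟨u, hPu, hadj⟩ := dom' (3*j+2) (by omega) hn2
      rcases (by omega : u = 3*j + 1 ∨ u = 3*j + 3) with h | h
      · have := inj (3*j+1) (3*j) (h ▸ hPu) hP (by omega); omega
      · exact ih (j+1) (by omega) (by omega)
          (show P (3*(j+1)) from by rw [show 3*(j+1) = 3*j+3 by ring]; exact h ▸ hPu)
  have final : ∀ j, j < k → P (3*j + 1) := by
    intro j hj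
    obtain ⟨m, hPm, hm3⟩ := surj j hj
    obtain ⟨hmlt, hmmem⟩ := hPm
    have hPm : P m := ⟨hmlt, hmmem⟩
    rcases (by omega : m = 3*j ∨ m = 3*j + 1 ∨ m = 3*j + 2) with h | h | h
    · exact absurd (h ▸ hPm) (desc (k - 1 - j) j hj (by omega))
    · exact h ▸ hPm
    · exact absurd (h ▸ hPm) (asc j hj)
  ext i
  simp only [Finset.mem_filter, Finset.mem_univ, true_and]
  constructor
  · intro hi
    by_contra h
    have hPi : P (i : ℕ) := ⟨i.isLt, by simpa using hi⟩
    have hilt := i.isLt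
    have hjk : (i : ℕ) / 3 < k := by omega
    rcases (by omega : (i : ℕ) = 3 * ((i:ℕ)/3) ∨ (i : ℕ) = 3 * ((i:ℕ)/3) + 2) with he | he
    · exact desc (k - 1 - (i:ℕ)/3) ((i:ℕ)/3) hjk (by omega) (he ▸ hPi)
    · exact asc ((i:ℕ)/3) hjk (he ▸ hPi)
  · intro hi
    have hilt := i.isLt
    obtain ⟨hlt, hmem⟩ := final ((i:ℕ)/3) (by omega)
    have : (⟨3 * ((i:ℕ)/3) + 1, hlt⟩ : Fin (3*k)) = i := by apply Fin.ext; simp; omega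
    exact this ▸ hmem

private lemma aux_domNum (k : ℕ) (hk : 1 ≤ k) : domNum (pathGraph (3*k)) = k := by
  have hkmem : k ∈ {m | ∃ S : Finset (Fin (3*k)),
      domSet (pathGraph (3*k)) S ∧ S.card = m} :=
    ⟨Finset.univ.filter (fun i : Fin (3*k) => (i : ℕ) % 3 = 1), aux_dom k hk, aux_card k⟩
  apply le_antisymm
  · exact Nat.sInf_le hkmem
  · apply le_csInf ⟨k, hkmem⟩
    rintro m ⟨S, hS, rfl⟩
    exact aux_lb k S hS

theorem stmt5 (n k : ℕ) (hk : 1 ≤ k) (hn : n = 3 * k) :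
    (∀ S : Finset (Fin n),
      (domSet (pathGraph n) S ∧ S.card = domNum (pathGraph n)) ↔
        S = Finset.univ.filter (fun i : Fin n => (i : ℕ) % 3 = 1)) ∧
    dominion (pathGraph n) = 1 := by
  subst hn
  have hiff : ∀ S : Finset (Fin (3*k)),
      (domSet (pathGraph (3*k)) S ∧ S.card = domNum (pathGraph (3*k))) ↔
        S = Finset.univ.filter (fun i : Fin (3*k) => (i : ℕ) % 3 = 1) := by
    intro S
    rw [aux_domNum k hk]
    constructor
    · rintro ⟨hd, hc⟩
      exact aux_unique k hk S hd hc
    · rintro rfl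
      exact ⟨aux_dom k hk, aux_card k⟩
  refine ⟨hiff, ?_⟩
  rw [dominion, Nat.card_eq_one_iff_unique]
  constructor
  · constructor
    intro a b
    apply Subtype.ext
    rw [(hiff a.1).mp a.2, (hiff b.1).mp b.2]
  · exact ⟨⟨Finset.univ.filter (fun i : Fin (3*k) => (i : ℕ) % 3 = 1), (hiff _).mpr rfl⟩⟩
end

section
/- If n = 3k + 2 with k ≥ 1, then the path P_n has exactly one minimum dominating set containing the endpoint v_n, namely {v_2, v_5, ..., v_{3k-1}, v_{3k+2}}. -/
open Finset SimpleGraph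

section aux

variable {n k : ℕ}

/-- Every block `{3j, 3j+1, 3j+2}` meets a dominating set. -/
lemma blockSurj (hn : n = 3 * k + 2) {S : Finset (Fin n)}
    (hS : domSet (pathGraph n) S) : ∀ j ≤ k, ∃ u ∈ S, (u : ℕ) / 3 = j := by
  intro j hj
  have hx : 3 * j + 1 < n := by omega
  by_cases hmem : (⟨3 * j + 1, hx⟩ : Fin n) ∈ S
  · exact ⟨_, hmem, by simp; omega⟩
  · obtain ⟨u, hu, hadj⟩ := hS _ hmem
    rw [pathGraph_adj] at hadj
    simp only [Fin.val_mk] at hadj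
    exact ⟨u, hu, by omega⟩

lemma lowerBound (hn : n = 3 * k + 2) {S : Finset (Fin n)}
    (hS : domSet (pathGraph n) S) : k + 1 ≤ S.card := by
  have := Finset.card_le_card_of_surjOn (s := S) (t := Finset.range (k + 1))
    (fun u : Fin n => (u : ℕ) / 3) ?_
  · simpa using this
  · intro j hj
    simp only [Finset.coe_range, Set.mem_Iio] at hj
    obtain ⟨u, hu, hju⟩ := blockSurj hn hS j (by omega)
    exact ⟨u, hu, hju⟩

/-- The candidate set as an image. -/
lemma T_spec (hn : n = 3 * k + 2) :
    (Finset.univ.filter (fun i : Fin n => (i : ℕ) % 3 = 1)) =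
      Finset.image (fun j : Fin (k + 1) => (⟨3 * (j : ℕ) + 1, by have := j.isLt; omega⟩ : Fin n))
        Finset.univ := by
  ext u
  simp only [Finset.mem_filter, Finset.mem_univ, true_and, Finset.mem_image]
  constructor
  · intro h
    have hlt := u.isLt
    refine ⟨⟨(u : ℕ) / 3, by omega⟩, Fin.ext ?_⟩
    simp
    omega
  · rintro ⟨j, -, rfl⟩
    simp

lemma T_card (hn : n = 3 * k + 2) :
    (Finset.univ.filter (fun i : Fin n => (i : ℕ) % 3 = 1)).card = k + 1 := by
  rw [T_spec hn, Finset.card_image_of_injective, Finset.card_univ, Fintype.card_fin]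
  intro a b hab
  have := congrArg Fin.val hab
  simp only [Fin.val_mk] at this
  exact Fin.ext (by omega)

lemma T_dom (hn : n = 3 * k + 2) :
    domSet (pathGraph n) (Finset.univ.filter (fun i : Fin n => (i : ℕ) % 3 = 1)) := by
  intro v hv
  simp only [Finset.mem_filter, Finset.mem_univ, true_and] at hv
  have hvlt := v.isLt
  have h3 : (v : ℕ) % 3 = 0 ∨ (v : ℕ) % 3 = 2 := by omega
  rcases h3 with h0 | h2
  · refine ⟨⟨(v : ℕ) + 1, by omega⟩, ?_, ?_⟩
    · simp only [Finset.mem_filter, Finset.mem_univ, true_and, Fin.val_mk]; omega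
    · rw [pathGraph_adj]; right; simp
  · refine ⟨⟨(v : ℕ) - 1, by omega⟩, ?_, ?_⟩
    · simp only [Finset.mem_filter, Finset.mem_univ, true_and, Fin.val_mk]; omega
    · rw [pathGraph_adj]; left; simp; omega

lemma domNum_eq (hn : n = 3 * k + 2) :
    domNum (pathGraph n) = k + 1 := by
  apply le_antisymm
  · exact Nat.sInf_le ⟨_, T_dom hn, T_card hn⟩
  · have hne : {m | ∃ S : Finset (Fin n), domSet (pathGraph n) S ∧ S.card = m}.Nonempty :=
      ⟨k + 1, _, T_dom hn, T_card hn⟩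
    apply le_csInf hne
    rintro m ⟨S, hS, rfl⟩
    exact lowerBound hn hS

end aux

theorem stmt6 (n k : ℕ) (hk : 1 ≤ k) (hn : n = 3 * k + 2) (S : Finset (Fin n)) :
    (domSet (pathGraph n) S ∧ S.card = domNum (pathGraph n) ∧
        (⟨n - 1, by omega⟩ : Fin n) ∈ S) ↔
      S = Finset.univ.filter (fun i : Fin n => (i : ℕ) % 3 = 1) := by
  constructor
  · rintro ⟨hdom, hcard, hend⟩
    rw [domNum_eq hn] at hcard
    -- the image of S under u ↦ u/3 is exactly range (k+1)
    have himg : S.image (fun u : Fin n => (u : ℕ) / 3) = Finset.range (k + 1) := by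
      apply Finset.Subset.antisymm
      · intro j hj
        simp only [Finset.mem_image] at hj
        obtain ⟨u, hu, rfl⟩ := hj
        have := u.isLt
        simp only [Finset.mem_range]
        omega
      · intro j hj
        simp only [Finset.mem_range] at hj
        obtain ⟨u, hu, hju⟩ := blockSurj hn hdom j (by omega)
        exact Finset.mem_image.mpr ⟨u, hu, hju⟩
    have hinj : Set.InjOn (fun u : Fin n => (u : ℕ) / 3) S :=
      Finset.injOn_of_card_image_eq (by rw [himg, Finset.card_range, hcard])
    -- Claim A: no element of S is ≡ 2 mod 3
    have hA : ∀ j, ∀ u : Fin n, u ∈ S → (u : ℕ) = 3 * j + 2 → False := by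
      intro j
      induction j using Nat.strong_induction_on with
      | _ j ih =>
        intro u hu hval
        have hult := u.isLt
        have hxlt : 3 * j < n := by omega
        have hxnot : (⟨3 * j, hxlt⟩ : Fin n) ∉ S := by
          intro hmem
          have heq := hinj (Finset.mem_coe.mpr hmem) (Finset.mem_coe.mpr hu)
            (show (3 * j) / 3 = (u : ℕ) / 3 by omega)
          have := congrArg Fin.val heq
          simp only [Fin.val_mk] at this
          omega
        obtain ⟨w, hw, hadj⟩ := hdom _ hxnot
        rw [pathGraph_adj] at hadj
        simp only [Fin.val_mk] at hadj
        rcases hadj with h1 | h2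
        · -- w + 1 = 3j, so w = 3(j-1)+2
          have hj1 : 1 ≤ j := by omega
          exact ih (j - 1) (by omega) w hw (by omega)
        · -- w = 3j+1, same block as u, contradiction
          have heq := hinj (Finset.mem_coe.mpr hw) (Finset.mem_coe.mpr hu)
            (show (w : ℕ) / 3 = (u : ℕ) / 3 by omega)
          have := congrArg Fin.val heq
          omega
    -- Claim B: downward induction, all 3j+1 are in S
    have hB : ∀ d, d ≤ k → ∀ (h : 3 * (k - d) + 1 < n), (⟨3 * (k - d) + 1, h⟩ : Fin n) ∈ S := by
      intro d
      induction d with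
      | zero =>
        intro _ h
        have : (⟨3 * (k - 0) + 1, h⟩ : Fin n) = ⟨n - 1, by omega⟩ := Fin.ext (by simp; omega)
        rw [this]; exact hend
      | succ d ih =>
        intro hd h
        have hih := ih (by omega) (by omega)
        have hxlt : 3 * (k - (d + 1)) + 2 < n := by omega
        have hxnot : (⟨3 * (k - (d + 1)) + 2, hxlt⟩ : Fin n) ∉ S := fun hmem =>
          hA (k - (d + 1)) _ hmem rfl
        obtain ⟨w, hw, hadj⟩ := hdom _ hxnot
        rw [pathGraph_adj] at hadj
        simp only [Fin.val_mk] at hadj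
        rcases hadj with h1 | h2
        · -- w = 3(k-(d+1))+1
          have : (⟨3 * (k - (d + 1)) + 1, h⟩ : Fin n) = w := Fin.ext (by simp; omega)
          rw [this]; exact hw
        · -- w = 3(k-(d+1))+3 = 3(k-d), same block as 3(k-d)+1 ∈ S
          have heq := hinj (Finset.mem_coe.mpr hw) (Finset.mem_coe.mpr hih)
            (show (w : ℕ) / 3 = (3 * (k - d) + 1) / 3 by omega)
          have := congrArg Fin.val heq
          simp only [Fin.val_mk] at this
          omega
    -- conclude S = T
    apply Finset.eq_of_subset_of_card_le
    · intro u hu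
      simp only [Finset.mem_filter, Finset.mem_univ, true_and]
      have hult := u.isLt
      by_contra hmod
      have h3 : (u : ℕ) % 3 = 0 ∨ (u : ℕ) % 3 = 2 := by omega
      rcases h3 with h0 | h2
      · have hb := hB (k - (u : ℕ) / 3) (by omega) (by omega)
        have heq := hinj (Finset.mem_coe.mpr hu) (Finset.mem_coe.mpr hb)
          (show (u : ℕ) / 3 = (3 * (k - (k - (u : ℕ) / 3)) + 1) / 3 by omega)
        have := congrArg Fin.val heq
        simp only [Fin.val_mk] at this
        omega
      · exact hA ((u : ℕ) / 3) u hu (by omega)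
    · rw [T_card hn, hcard]
  · rintro rfl
    refine ⟨T_dom hn, by rw [T_card hn, domNum_eq hn], ?_⟩
    simp only [Finset.mem_filter, Finset.mem_univ, true_and, Fin.val_mk]
    omega
end

section
/- If n ≡ 2 (mod 3) and n ≥ 5, then the number of minimum dominating sets of the path P_n equals ⌈n/3⌉ + 1. -/
open Finset SimpleGraph

/-! Write `n = 3k + 2`. A vertex of a path dominates at most three vertices, so a dominating
set `S` has at least `m + 1` vertices in `[0, 3m + 1]` (they dominate `0, …, 3m`) and at least
`k - m + 1` in `[3m, n)` (they dominate `3m + 1, …, n - 1`). If `|S| = k + 1` these two parts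
overlap, so `S` meets each pair `{3m, 3m + 1}` (`m ≤ k`), hence exactly once, and avoids every
`3m + 2`. Dominating `3m + 2` then forces `3m + 3 ∈ S` whenever `3m ∈ S`, so the pairs from which
`S` takes the right vertex form an initial segment `m < j`. Each of the `k + 2` choices
`0 ≤ j ≤ k + 1` gives a minimum dominating set. -/

theorem SimpleGraph.card_le_mul_card_of_forall_exists_adj {V : Type*} [Fintype V] [DecidableEq V]
    (G : SimpleGraph V) [DecidableRel G.Adj] {d : ℕ} (hd : ∀ v, G.degree v ≤ d)
    {P T : Finset V} (hPT : ∀ v ∈ P, ∃ u ∈ T, u = v ∨ G.Adj u v) :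
    #P ≤ (d + 1) * #T := by
  have hsub : P ⊆ T.biUnion fun u ↦ insert u (G.neighborFinset u) := by
    intro v hv
    obtain ⟨u, hu, huv⟩ := hPT v hv
    exact mem_biUnion.2 ⟨u, hu, by simpa [eq_comm] using huv⟩
  calc #P ≤ #(T.biUnion fun u ↦ insert u (G.neighborFinset u)) := card_le_card hsub
    _ ≤ ∑ u ∈ T, #(insert u (G.neighborFinset u)) := card_biUnion_le
    _ ≤ ∑ _u ∈ T, (d + 1) := sum_le_sum fun u _ ↦ (card_insert_le _ _).trans <| by
        rw [card_neighborFinset_eq_degree]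
        exact Nat.succ_le_succ (hd u)
    _ = (d + 1) * #T := by rw [sum_const, smul_eq_mul, mul_comm]

instance pathGraph_decidableAdj (n : ℕ) : DecidableRel (pathGraph n).Adj :=
  fun _ _ ↦ decidable_of_iff' _ pathGraph_adj

theorem SimpleGraph.pathGraph_degree_le_two {n : ℕ} (v : Fin n) :
    (pathGraph n).degree v ≤ 2 := by
  rw [← card_neighborFinset_eq_degree]
  calc #((pathGraph n).neighborFinset v) ≤ #({v.val - 1, v.val + 1} : Finset ℕ) := by
        refine card_le_card_of_injOn Fin.val (fun u hu ↦ ?_) Fin.val_injective.injOn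
        rw [mem_coe, mem_neighborFinset, pathGraph_adj] at hu
        simp only [coe_insert, coe_singleton, Set.mem_insert_iff, Set.mem_singleton_iff]
        omega
    _ ≤ 2 := card_le_two

namespace PathDomination

theorem sub_le_three_mul_card_of_domSet {n : ℕ} {S : Finset (Fin n)}
    (hS : domSet (pathGraph n) S) {a b : ℕ} (hb : b ≤ n) :
    b - a ≤ 3 * #{v ∈ S | a ≤ v.val + 1 ∧ v.val ≤ b} := by
  have hP : ∀ x ∈ Ico a b, x < n := fun x hx ↦ by rw [mem_Ico] at hx; omega
  rw [← Nat.card_Ico, ← card_attachFin _ hP]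
  refine (pathGraph n).card_le_mul_card_of_forall_exists_adj pathGraph_degree_le_two fun v hv ↦ ?_
  rw [mem_attachFin, mem_Ico] at hv
  by_cases hvS : v ∈ S
  · exact ⟨v, mem_filter.2 ⟨hvS, by omega⟩, Or.inl rfl⟩
  · obtain ⟨u, hu, huv⟩ := hS v hvS
    have := pathGraph_adj.1 huv
    exact ⟨u, mem_filter.2 ⟨hu, by omega⟩, Or.inr huv⟩

variable {k : ℕ} {S : Finset (Fin (3 * k + 2))}

theorem succ_le_card_of_domSet (hS : domSet (pathGraph (3 * k + 2)) S) : k + 1 ≤ #S := by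
  have := sub_le_three_mul_card_of_domSet hS (a := 0) le_rfl
  have := card_filter_le S fun v : Fin (3 * k + 2) ↦ 0 ≤ v.val + 1 ∧ v.val ≤ 3 * k + 2
  omega

theorem exists_mem_of_div_three_eq (hS : domSet (pathGraph (3 * k + 2)) S) (hcard : #S = k + 1)
    {m : ℕ} (hm : m ≤ k) : ∃ v ∈ S, v.val / 3 = m ∧ v.val % 3 ≠ 2 := by
  set L := {v ∈ S | 0 ≤ v.val + 1 ∧ v.val ≤ 3 * m + 1}
  set R := {v ∈ S | 3 * m + 1 ≤ v.val + 1 ∧ v.val ≤ 3 * k + 2}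
  have hL : 3 * m + 1 - 0 ≤ 3 * #L := sub_le_three_mul_card_of_domSet hS (by omega)
  have hR : 3 * k + 2 - (3 * m + 1) ≤ 3 * #R := sub_le_three_mul_card_of_domSet hS le_rfl
  have hLR : #(L ∪ R) ≤ #S :=
    card_le_card (union_subset (filter_subset _ _) (filter_subset _ _))
  obtain ⟨v, hv⟩ : (L ∩ R).Nonempty := by
    rw [← card_pos]
    have := card_union_add_card_inter L R
    omega
  simp only [L, R, mem_inter, mem_filter] at hv
  exact ⟨v, hv.1.1, by omega, by omega⟩

theorem surjOn_val_div_three (hS : domSet (pathGraph (3 * k + 2)) S) (hcard : #S = k + 1) :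
    Set.SurjOn (fun v : Fin (3 * k + 2) ↦ v.val / 3) ↑{v ∈ S | v.val % 3 ≠ 2}
      ↑(range (k + 1)) := by
  intro m hm
  obtain ⟨v, hvS, hvm, hv2⟩ :=
    exists_mem_of_div_three_eq hS hcard (Nat.lt_succ_iff.1 (mem_range.1 hm))
  exact ⟨v, mem_filter.2 ⟨hvS, hv2⟩, hvm⟩

theorem val_mod_three_ne_two (hS : domSet (pathGraph (3 * k + 2)) S) (hcard : #S = k + 1)
    {v : Fin (3 * k + 2)} (hv : v ∈ S) : v.val % 3 ≠ 2 := by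
  have hle := card_le_card_of_surjOn _ (surjOn_val_div_three hS hcard)
  rw [card_range, ← hcard] at hle
  rw [← eq_of_subset_of_card_le (filter_subset _ S) hle] at hv
  exact (mem_filter.1 hv).2

theorem injOn_val_div_three (hS : domSet (pathGraph (3 * k + 2)) S) (hcard : #S = k + 1) :
    Set.InjOn (fun v : Fin (3 * k + 2) ↦ v.val / 3) S := by
  have hfilter : {v ∈ S | v.val % 3 ≠ 2} = S :=
    filter_true_of_mem fun _ ↦ val_mod_three_ne_two hS hcard
  rw [← hfilter]
  refine injOn_of_surjOn_of_card_le _ (fun v _ ↦ ?_) (surjOn_val_div_three hS hcard) ?_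
  · rw [mem_coe, mem_range]
    omega
  · rw [hfilter, hcard, card_range]

theorem mem_iff_val_mod_three_eq (hS : domSet (pathGraph (3 * k + 2)) S) (hcard : #S = k + 1)
    {u v : Fin (3 * k + 2)} (hu : u ∈ S) (huv : u.val / 3 = v.val / 3) :
    v ∈ S ↔ v.val % 3 = u.val % 3 := by
  constructor
  · intro hv
    rw [injOn_val_div_three hS hcard hv hu huv.symm]
  · intro hmod
    rwa [show v = u from Fin.ext (by omega)]

theorem val_mod_three_eq_one_iff (hS : domSet (pathGraph (3 * k + 2)) S) (hcard : #S = k + 1)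
    {u : Fin (3 * k + 2)} (hu : u ∈ S) :
    u.val % 3 = 1 ↔ ∃ w ∈ S, w.val = 3 * (u.val / 3) + 1 := by
  constructor
  · exact fun h ↦ ⟨u, hu, by omega⟩
  · rintro ⟨w, hw, hwval⟩
    rw [(mem_iff_val_mod_three_eq hS hcard hw (by omega)).1 hu]
    omega

theorem exists_mem_val_eq_add_three (hS : domSet (pathGraph (3 * k + 2)) S) (hcard : #S = k + 1)
    {u : Fin (3 * k + 2)} (hu : u ∈ S) (hu0 : u.val % 3 = 0) (hk : u.val / 3 < k) :
    ∃ w ∈ S, w.val = u.val + 3 := by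
  set v : Fin (3 * k + 2) := ⟨u.val + 2, by omega⟩
  have hv : v ∉ S := fun hv ↦ val_mod_three_ne_two hS hcard hv (by simp [v]; omega)
  obtain ⟨w, hw, hwv⟩ := hS v hv
  rw [pathGraph_adj] at hwv
  refine ⟨w, hw, ?_⟩
  rcases hwv with hwv | hwv
  · simp only [v] at hwv
    have := injOn_val_div_three hS hcard hw hu (show w.val / 3 = u.val / 3 by omega)
    rw [this] at hwv
    omega
  · simp only [v] at hwv
    omega

def shiftedDomSet (n j : ℕ) : Finset (Fin n) :=
  {v | v.val % 3 = if v.val / 3 < j then 1 else 0}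

theorem mem_shiftedDomSet {n j : ℕ} {v : Fin n} :
    v ∈ shiftedDomSet n j ↔ v.val % 3 = if v.val / 3 < j then 1 else 0 := by
  simp [shiftedDomSet]

theorem domSet_shiftedDomSet (j : ℕ) :
    domSet (pathGraph (3 * k + 2)) (shiftedDomSet _ j) := by
  intro v hv
  rw [mem_shiftedDomSet] at hv
  have hvlt := v.isLt
  obtain ⟨w, hwlt, hw, hvw⟩ : ∃ w < 3 * k + 2,
      (w % 3 = if w / 3 < j then 1 else 0) ∧ (w + 1 = v.val ∨ v.val + 1 = w) := by
    by_cases hvj : v.val / 3 < j <;> simp only [hvj, if_true, if_false] at hv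
    · by_cases hv0 : v.val % 3 = 0
      · exact ⟨v.val + 1, by omega, by rw [if_pos (by omega)]; omega, by omega⟩
      · exact ⟨v.val - 1, by omega, by rw [if_pos (by omega)]; omega, by omega⟩
    · by_cases hv1 : v.val % 3 = 1
      · exact ⟨v.val - 1, by omega, by rw [if_neg (by omega)]; omega, by omega⟩
      · exact ⟨v.val + 1, by omega, by rw [if_neg (by omega)]; omega, by omega⟩
  exact ⟨⟨w, hwlt⟩, mem_shiftedDomSet.2 hw, pathGraph_adj.2 hvw⟩

theorem card_shiftedDomSet (j : ℕ) : #(shiftedDomSet (3 * k + 2) j) = k + 1 := by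
  rw [← card_range (k + 1)]
  refine card_nbij (fun v ↦ v.val / 3) (fun v _ ↦ ?_) (fun u hu v hv huv ↦ ?_) (fun m hm ↦ ?_)
  · rw [mem_coe, mem_range]
    exact Nat.div_lt_of_lt_mul (by omega)
  · rw [mem_coe, mem_shiftedDomSet] at hu hv
    simp only at huv
    rw [huv] at hu
    exact Fin.ext (by omega)
  · rw [mem_coe, mem_range] at hm
    refine ⟨⟨3 * m + if m < j then 1 else 0, by split_ifs <;> omega⟩, ?_, ?_⟩ <;>
      simp only [mem_coe, mem_shiftedDomSet] <;> split_ifs <;> omega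

theorem shiftedDomSet_injOn : Set.InjOn (shiftedDomSet (3 * k + 2)) (range (k + 2)) := by
  have hmem : ∀ a j (ha : a ≤ k),
      (⟨3 * a + 1, by omega⟩ : Fin (3 * k + 2)) ∈ shiftedDomSet _ j ↔ a < j :=
    fun a j _ ↦ by rw [mem_shiftedDomSet]; dsimp only; split_ifs <;> omega
  have hlt : ∀ a b, a < b → b ≤ k + 1 → shiftedDomSet (3 * k + 2) a ≠ shiftedDomSet _ b :=
    fun a b hab hb heq ↦
      lt_irrefl a <| (hmem a a (by omega)).1 <| heq ▸ (hmem a b (by omega)).2 hab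
  intro a ha b hb hab
  rw [mem_coe, mem_range] at ha hb
  rcases lt_trichotomy a b with h | h | h
  · exact absurd hab (hlt a b h (by omega))
  · exact h
  · exact absurd hab.symm (hlt b a h (by omega))

theorem exists_eq_shiftedDomSet (hS : domSet (pathGraph (3 * k + 2)) S) (hcard : #S = k + 1) :
    ∃ j ≤ k + 1, S = shiftedDomSet _ j := by
  set shifted : ℕ → Prop := fun m ↦ ∃ w ∈ S, w.val = 3 * m + 1
  have hanti : Antitone shifted := antitone_nat_of_succ_le <| by
    rintro m ⟨w, hw, hwval⟩
    obtain ⟨u, hu, hum, hu2⟩ := exists_mem_of_div_three_eq hS hcard (m := m) (by omega)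
    by_contra hm
    have hu0 : u.val % 3 = 0 := by
      have := (val_mod_three_eq_one_iff hS hcard hu).not.2 (by rwa [hum])
      omega
    obtain ⟨w', hw', hw'val⟩ := exists_mem_val_eq_add_three hS hcard hu hu0 (by omega)
    have := injOn_val_div_three hS hcard hw hw' (show w.val / 3 = w'.val / 3 by omega)
    rw [this] at hwval
    omega
  have hex : ∃ m, ¬ shifted m := ⟨k + 1, fun ⟨w, _, hw⟩ ↦ by omega⟩
  have hshifted : ∀ m, shifted m ↔ m < Nat.find hex := fun m ↦ by
    rw [Nat.lt_find_iff]
    exact ⟨fun hm n hnm ↦ not_not.2 (hanti hnm hm), fun h ↦ not_not.1 (h m le_rfl)⟩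
  refine ⟨Nat.find hex, Nat.find_le (fun ⟨w, _, hw⟩ ↦ by omega), ?_⟩
  ext v
  obtain ⟨u, hu, huv, hu2⟩ := exists_mem_of_div_three_eq hS hcard (m := v.val / 3) (by omega)
  have hbit : u.val % 3 = 1 ↔ v.val / 3 < Nat.find hex :=
    (val_mod_three_eq_one_iff hS hcard hu).trans (huv ▸ hshifted _)
  rw [mem_iff_val_mod_three_eq hS hcard hu huv, mem_shiftedDomSet]
  by_cases h : v.val / 3 < Nat.find hex
  · rw [if_pos h, hbit.2 h]
  · rw [if_neg h]
    have := mt hbit.1 h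
    omega

theorem domNum_pathGraph : domNum (pathGraph (3 * k + 2)) = k + 1 := by
  have hmem : k + 1 ∈ {m | ∃ S : Finset (Fin (3 * k + 2)), domSet (pathGraph _) S ∧ #S = m} :=
    ⟨_, domSet_shiftedDomSet 0, card_shiftedDomSet 0⟩
  refine le_antisymm (Nat.sInf_le hmem) (le_csInf ⟨_, hmem⟩ ?_)
  rintro _ ⟨S, hS, rfl⟩
  exact succ_le_card_of_domSet hS

end PathDomination

theorem stmt7_general (n : ℕ) (hmod : n % 3 = 2) :
    dominion (pathGraph n) = n / 3 + 2 := by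
  obtain ⟨k, rfl⟩ : ∃ k, n = 3 * k + 2 := ⟨n / 3, by omega⟩
  have hmin : ∀ S, (domSet (pathGraph (3 * k + 2)) S ∧ #S = domNum (pathGraph (3 * k + 2))) ↔
      S ∈ (range (k + 2)).image (PathDomination.shiftedDomSet _) := by
    intro S
    rw [PathDomination.domNum_pathGraph, mem_image]
    constructor
    · rintro ⟨hS, hcard⟩
      obtain ⟨j, hj, rfl⟩ := PathDomination.exists_eq_shiftedDomSet hS hcard
      exact ⟨j, mem_range.2 (by omega), rfl⟩
    · rintro ⟨j, -, rfl⟩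
      exact ⟨PathDomination.domSet_shiftedDomSet j, PathDomination.card_shiftedDomSet j⟩
  rw [dominion, Nat.card_congr (Equiv.subtypeEquivRight hmin), Nat.card_eq_fintype_card,
    Fintype.card_coe, card_image_of_injOn PathDomination.shiftedDomSet_injOn, card_range]
  omega

theorem stmt7 (n : ℕ) (hn : 5 ≤ n) (hmod : n % 3 = 2) :
    dominion (pathGraph n) = n / 3 + 2 :=
  stmt7_general n hmod
end

section
/- If n = 3k with k ≥ 1, then the cycle C_n has exactly 3 minimum dominating sets; that is, ζ(C_{3k}) = 3. -/
open Finset SimpleGraph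

/-!
Each closed neighbourhood in `C_n` has three vertices, so a dominating set has at least `n / 3`
elements, and one with exactly `n / 3` elements has pairwise disjoint closed neighbourhoods.
For such a set `S`, `u ∈ S` forces `u + 1, u + 2 ∉ S` (each would share a closed neighbour
with `u`), so `u + 2` can only be dominated by `u + 3`. Hence `S` is closed under `+ 3` and
contains, hence equals, the residue class of `u` modulo `3`. Conversely each of the three
residue classes dominates `C_{3k}`.
-/

theorem Finset.pairwiseDisjoint_of_sum_card_le_card_biUnion {ι α : Type*} [Fintype ι]
    [DecidableEq ι] [DecidableEq α] {s : Finset ι} {t : ι → Finset α}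
    (h : ∑ i ∈ s, #(t i) ≤ #(s.biUnion t)) : (s : Set ι).PairwiseDisjoint t := by
  rintro i (hi : i ∈ s) j (hj : j ∈ s) hij
  rw [Function.onFun, Finset.disjoint_left]
  intro x hxi hxj
  have hcover : ∀ y ∈ s.biUnion t, 1 ≤ #{l | l ∈ s ∧ y ∈ t l} := by
    intro y hy
    obtain ⟨l, hl, hyl⟩ := mem_biUnion.mp hy
    exact card_pos.mpr ⟨l, by simp [hl, hyl]⟩
  have hx : x ∈ s.biUnion t := mem_biUnion.mpr ⟨i, hi, hxi⟩
  have htwice : 1 < #{l | l ∈ s ∧ x ∈ t l} :=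
    one_lt_card.mpr ⟨i, by simp [hi, hxi], j, by simp [hj, hxj], hij⟩
  have := calc #(s.biUnion t) = ∑ y ∈ s.biUnion t, 1 := card_eq_sum_ones _
    _ < ∑ y ∈ s.biUnion t, #{l | l ∈ s ∧ y ∈ t l} := sum_lt_sum hcover ⟨x, hx, htwice⟩
    _ = ∑ i ∈ s, #(t i) := (sum_card_eq_sum_biUnion_card t s).symm
  omega

theorem Set.add_nsmul_mem_of_add_mem {M : Type*} [AddMonoid M] {S : Set M} {a u : M}
    (hS : ∀ x ∈ S, x + a ∈ S) (hu : u ∈ S) (t : ℕ) : u + t • a ∈ S := by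
  induction t with
  | zero => simpa using hu
  | succ t ih => simpa [succ_nsmul, add_assoc] using hS _ ih

namespace SimpleGraph

variable {V : Type*} [Fintype V] [DecidableEq V] (G : SimpleGraph V) [DecidableRel G.Adj]

def closedNbhd (u : V) : Finset V := insert u (G.neighborFinset u)

variable {G}

theorem mem_closedNbhd {u v : V} : v ∈ G.closedNbhd u ↔ v = u ∨ G.Adj u v := by
  simp [closedNbhd]

theorem mem_closedNbhd_comm {u v : V} : v ∈ G.closedNbhd u ↔ u ∈ G.closedNbhd v := by
  simp only [mem_closedNbhd, G.adj_comm, eq_comm]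

theorem card_closedNbhd (u : V) : #(G.closedNbhd u) = G.degree u + 1 :=
  card_insert_of_notMem (by simp)

theorem domSet_iff_biUnion_closedNbhd {S : Finset V} :
    domSet G S ↔ S.biUnion G.closedNbhd = univ := by
  simp only [domSet, eq_univ_iff_forall, mem_biUnion, mem_closedNbhd]
  constructor
  · intro hS v
    by_cases hv : v ∈ S
    · exact ⟨v, hv, .inl rfl⟩
    · obtain ⟨u, hu, huv⟩ := hS v hv
      exact ⟨u, hu, .inr huv⟩
  · intro hS v hv
    obtain ⟨u, hu, rfl | huv⟩ := hS v
    · exact absurd hu hv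
    · exact ⟨u, hu, huv⟩

variable {d : ℕ} {S : Finset V}

theorem sum_card_closedNbhd (hG : G.IsRegularOfDegree d) (S : Finset V) :
    ∑ u ∈ S, #(G.closedNbhd u) = (d + 1) * #S := by
  simp [card_closedNbhd, hG.degree_eq, mul_comm]

theorem card_le_mul_card_of_domSet (hG : G.IsRegularOfDegree d) (hS : domSet G S) :
    Fintype.card V ≤ (d + 1) * #S := by
  rw [← card_univ, ← domSet_iff_biUnion_closedNbhd.mp hS, ← sum_card_closedNbhd hG]
  exact card_biUnion_le

theorem pairwiseDisjoint_closedNbhd_of_domSet (hG : G.IsRegularOfDegree d) (hS : domSet G S)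
    (hcard : (d + 1) * #S ≤ Fintype.card V) : (S : Set V).PairwiseDisjoint G.closedNbhd := by
  refine pairwiseDisjoint_of_sum_card_le_card_biUnion ?_
  rwa [sum_card_closedNbhd hG, domSet_iff_biUnion_closedNbhd.mp hS, card_univ]

end SimpleGraph

theorem domNum_eq_of_forall_le {V : Type*} [Fintype V] {G : SimpleGraph V} {k : ℕ}
    (hex : ∃ S, domSet G S ∧ #S = k) (hle : ∀ S, domSet G S → k ≤ #S) : domNum G = k :=
  le_antisymm (Nat.sInf_le hex) (le_csInf ⟨k, hex⟩ fun _ ⟨S, hS, hcard⟩ => hcard ▸ hle S hS)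

open Fin.CommRing

def residueClass (n : ℕ) (r : Fin 3) : Finset (Fin n) := {v | v.val % 3 = r.val}

section ResidueClass

variable {n : ℕ}

theorem mem_residueClass {r : Fin 3} {v : Fin n} : v ∈ residueClass n r ↔ v.val % 3 = r.val := by
  simp [residueClass]

theorem card_residueClass (h : 3 ∣ n) (r : Fin 3) : #(residueClass n r) = n / 3 := by
  rw [← Fintype.card_fin (n / 3), ← card_univ]
  refine card_nbij' (fun v => ⟨v.val / 3, by omega⟩) (fun i => ⟨3 * i.val + r.val, by omega⟩)
    ?_ ?_ ?_ ?_
  · intro v _; exact mem_univ _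
  · intro i _; rw [mem_coe, mem_residueClass]; simp
  · intro v hv; rw [mem_coe, mem_residueClass] at hv; exact Fin.ext (by dsimp only; omega)
  · intro i _; exact Fin.ext (by dsimp only; omega)

theorem residueClass_injective (hn : 3 ≤ n) : Function.Injective (residueClass n) := by
  intro r s hrs
  have hr : (⟨r.val, by omega⟩ : Fin n) ∈ residueClass n r := by simp [mem_residueClass]
  rw [hrs, mem_residueClass] at hr
  simpa [Fin.ext_iff, Nat.mod_eq_of_lt r.isLt] using hr

theorem val_add_mod_three (h : 3 ∣ n) (a b : Fin n) : (a + b).val % 3 = (a.val + b.val) % 3 := by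
  rw [Fin.val_add, Nat.mod_mod_of_dvd _ h]

theorem exists_add_nsmul_three_eq [NeZero n] (h : 3 ∣ n) {u v : Fin n}
    (huv : u.val % 3 = v.val % 3) : ∃ t : ℕ, u + t • 3 = v := by
  refine ⟨(v.val + n - u.val) / 3, Fin.ext ?_⟩
  have hcast : ((v.val + n - u.val) / 3) • (3 : Fin n) = ((v.val + n - u.val : ℕ) : Fin n) := by
    rw [nsmul_eq_mul, ← Nat.cast_ofNat (R := Fin n) (n := 3), ← Nat.cast_mul,
      Nat.div_mul_cancel (by omega)]
  rw [hcast, Fin.val_add, Fin.val_natCast, Nat.add_mod_mod, Nat.add_sub_cancel' (by omega),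
    Nat.add_mod_right, Nat.mod_eq_of_lt v.isLt]

theorem residueClass_subset_of_add_three_mem [NeZero n] (h : 3 ∣ n) {S : Finset (Fin n)}
    (hS : ∀ x ∈ S, x + 3 ∈ S) {u : Fin n} (hu : u ∈ S) : residueClass n u.val ⊆ S := by
  intro v hv
  rw [mem_residueClass, Fin.val_natCast] at hv
  obtain ⟨t, rfl⟩ := exists_add_nsmul_three_eq h hv.symm
  exact Set.add_nsmul_mem_of_add_mem (S := (S : Set (Fin n))) hS hu t

end ResidueClass

section Cycle

variable {m : ℕ}

theorem cycleGraph_isRegularOfDegree : (cycleGraph (m + 3)).IsRegularOfDegree 2 :=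
  fun _ => cycleGraph_degree_three_le

theorem mem_closedNbhd_cycleGraph {u v : Fin (m + 3)} :
    v ∈ (cycleGraph (m + 3)).closedNbhd u ↔ v = u ∨ v = u - 1 ∨ v = u + 1 := by
  simp [closedNbhd, cycleGraph_neighborFinset]

theorem add_three_mem_of_pairwiseDisjoint {S : Finset (Fin (m + 3))}
    (hS : domSet (cycleGraph (m + 3)) S)
    (hdisj : (S : Set (Fin (m + 3))).PairwiseDisjoint (cycleGraph (m + 3)).closedNbhd)
    {u : Fin (m + 3)} (hu : u ∈ S) : u + 3 ∈ S := by
  have hshared : ∀ w ∈ S, ∀ x, x ∈ (cycleGraph (m + 3)).closedNbhd u →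
      x ∈ (cycleGraph (m + 3)).closedNbhd w → w = u := fun w hw x hxu hxw =>
    of_not_not fun hwu => disjoint_left.mp (hdisj hw hu hwu) hxw hxu
  have h1 : u + 1 ∉ S := fun h =>
    (show u + 1 ≠ u by simp) (hshared _ h u (by simp [mem_closedNbhd_cycleGraph])
      (by simp [mem_closedNbhd_cycleGraph]))
  have h2 : u + 2 ∉ S := fun h =>
    (show u + 2 ≠ u by simp [Fin.ext_iff, Nat.mod_eq_of_lt (show 2 < m + 3 by omega)])
      (hshared _ h (u + 1) (by simp [mem_closedNbhd_cycleGraph])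
        (by rw [mem_closedNbhd_cycleGraph]; right; left; ring))
  obtain ⟨w, hw, hmem⟩ := mem_biUnion.mp
    ((domSet_iff_biUnion_closedNbhd.mp hS).symm ▸ mem_univ (u + 2))
  rw [mem_closedNbhd_comm, mem_closedNbhd_cycleGraph] at hmem
  rcases hmem with rfl | rfl | rfl
  · exact absurd hw h2
  · exact absurd (by rwa [show u + 2 - 1 = u + 1 by ring] at hw) h1
  · rwa [show u + 2 + 1 = u + 3 by ring] at hw

theorem domSet_residueClass (h : 3 ∣ m + 3) (r : Fin 3) :
    domSet (cycleGraph (m + 3)) (residueClass (m + 3) r) := by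
  intro v hv
  rw [mem_residueClass] at hv
  have hsucc := val_add_mod_three h v 1
  have hpred := val_add_mod_three h (v - 1) 1
  rw [sub_add_cancel] at hpred
  simp only [Fin.val_one] at hsucc hpred
  by_cases hr : (v.val + 1) % 3 = r.val
  · refine ⟨v + 1, mem_residueClass.mpr (by omega), ?_⟩
    rw [cycleGraph_adj]; left; ring
  · refine ⟨v - 1, mem_residueClass.mpr (by omega), ?_⟩
    rw [cycleGraph_adj]; right; ring

theorem eq_residueClass_of_domSet (h : 3 ∣ m + 3) {S : Finset (Fin (m + 3))}
    (hS : domSet (cycleGraph (m + 3)) S) (hcard : 3 * #S ≤ m + 3) :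
    ∃ r, S = residueClass (m + 3) r := by
  have hdisj := pairwiseDisjoint_closedNbhd_of_domSet cycleGraph_isRegularOfDegree hS
    (by simpa using hcard)
  have hlower := card_le_mul_card_of_domSet cycleGraph_isRegularOfDegree hS
  simp only [Fintype.card_fin] at hlower
  obtain ⟨u, hu⟩ : S.Nonempty := card_pos.mp (by omega)
  refine ⟨u.val, (eq_of_subset_of_card_le ?_ ?_).symm⟩
  · exact residueClass_subset_of_add_three_mem h
      (fun x hx => add_three_mem_of_pairwiseDisjoint hS hdisj hx) hu
  · rw [card_residueClass h]
    omega

theorem domNum_cycleGraph (h : 3 ∣ m + 3) : domNum (cycleGraph (m + 3)) = (m + 3) / 3 :=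
  domNum_eq_of_forall_le ⟨_, domSet_residueClass h 0, card_residueClass h 0⟩ fun S hS => by
    have := card_le_mul_card_of_domSet cycleGraph_isRegularOfDegree hS
    simp only [Fintype.card_fin] at this
    omega

theorem dominion_cycleGraph (h : 3 ∣ m + 3) : dominion (cycleGraph (m + 3)) = 3 := by
  have hmin : {S | domSet (cycleGraph (m + 3)) S ∧ #S = domNum (cycleGraph (m + 3))} =
      Set.range (residueClass (m + 3)) := by
    ext S
    rw [Set.mem_ofPred_eq, domNum_cycleGraph h]
    constructor
    · rintro ⟨hS, hcard⟩
      obtain ⟨r, rfl⟩ := eq_residueClass_of_domSet h hS (by omega)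
      exact ⟨r, rfl⟩
    · rintro ⟨r, rfl⟩
      exact ⟨domSet_residueClass h r, card_residueClass h r⟩
  rw [dominion, ← Set.coe_ofPred, hmin,
    Nat.card_range_of_injective (residueClass_injective (by omega)), Nat.card_fin]

end Cycle

theorem stmt11 (n k : ℕ) (hk : 1 ≤ k) (hn : n = 3 * k) :
    dominion (cycleGraph n) = 3 := by
  obtain ⟨m, rfl⟩ : ∃ m, n = m + 3 := ⟨n - 3, by omega⟩
  exact dominion_cycleGraph (by omega)
end

section
/- If n ≡ 1 (mod 3) and n ≥ 4, then the number of minimum dominating sets of the cycle C_n equals (n^2 + 5n)/6. -/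
open Finset SimpleGraph

/-!
Write `n = 3k + 1`. Every closed neighbourhood in `C_n` has at most three vertices, so
`γ(C_n) = k + 1`, and the gaps between cyclically consecutive points of a minimum dominating set
are at most `3` and sum to `3k + 1`: all of them equal `3` except for two units of shortening,
placed on an unordered pair of the `k + 1` gaps. For a set through `0` this is seen on the blocks
`{3m+1, 3m+2, 3m+3}`, each of which it meets exactly once, so these sets correspond to the
`(k+2).choose 2` such pairs. Rotations act transitively on the vertices, so double counting pairs
(minimum dominating set, point of it) gives `ζ(C_n) · (k + 1) = n · (k+2).choose 2`, that is
`ζ(C_n) = n (k + 2) / 2 = (n² + 5n) / 6`.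
-/

section Domination

variable {V W : Type*}

theorem domSet.map {G : SimpleGraph V} {H : SimpleGraph W} (e : G ≃g H) {S : Finset V}
    (h : domSet G S) : domSet H (S.map e.toEquiv.toEmbedding) := by
  intro w hw
  obtain ⟨u, hu, hadj⟩ := h (e.symm w) fun hS => hw (mem_map_equiv.mpr hS)
  exact ⟨e u, mem_map_of_mem _ hu, by simpa using e.map_adj_iff.mpr hadj⟩

theorem card_le_mul_card_of_domSet [Fintype V] [DecidableEq V] {G : SimpleGraph V}
    [DecidableRel G.Adj] {d : ℕ} (hd : ∀ v, G.degree v ≤ d) {S : Finset V} (h : domSet G S) :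
    Fintype.card V ≤ (d + 1) * #S := by
  have hcover : (univ : Finset V) ⊆ S.biUnion fun u => insert u (G.neighborFinset u) := by
    intro v _
    by_cases hv : v ∈ S
    · exact mem_biUnion.mpr ⟨v, hv, mem_insert_self _ _⟩
    · obtain ⟨u, hu, hadj⟩ := h v hv
      exact mem_biUnion.mpr ⟨u, hu, mem_insert_of_mem ((G.mem_neighborFinset _ _).mpr hadj)⟩
  calc Fintype.card V = #(univ : Finset V) := rfl
    _ ≤ ∑ u ∈ S, #(insert u (G.neighborFinset u)) :=
      (card_le_card hcover).trans card_biUnion_le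
    _ ≤ ∑ _u ∈ S, (d + 1) :=
      sum_le_sum fun u _ => (card_insert_le _ _).trans (by simpa using hd u)
    _ = (d + 1) * #S := by rw [sum_const, smul_eq_mul, mul_comm]

open Classical in
noncomputable def domSetsOfCard [Fintype V] (G : SimpleGraph V) (c : ℕ) : Finset (Finset V) :=
  {S | domSet G S ∧ #S = c}

theorem mem_domSetsOfCard [Fintype V] {G : SimpleGraph V} {c : ℕ} {S : Finset V} :
    S ∈ domSetsOfCard G c ↔ domSet G S ∧ #S = c := by
  simp [domSetsOfCard]

theorem dominion_eq_card_domSetsOfCard [Fintype V] (G : SimpleGraph V) :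
    dominion G = #(domSetsOfCard G (domNum G)) := by
  classical
  rw [dominion, Nat.card_eq_fintype_card, Fintype.card_subtype]
  congr 1

theorem card_filter_mem_domSetsOfCard_of_iso [Fintype V] [DecidableEq V] {G : SimpleGraph V}
    (e : G ≃g G) (c : ℕ) (a : V) :
    #{S ∈ domSetsOfCard G c | e a ∈ S} = #{S ∈ domSetsOfCard G c | a ∈ S} := by
  refine card_nbij' (fun S => S.map e.symm.toEquiv.toEmbedding)
    (fun S => S.map e.toEquiv.toEmbedding) ?_ ?_ ?_ ?_
  · intro S hS
    simp only [coe_filter, mem_domSetsOfCard, Set.mem_ofPred_eq] at hS ⊢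
    refine ⟨⟨hS.1.1.map e.symm, by rw [card_map, hS.1.2]⟩, ?_⟩
    exact mem_map_equiv.mpr hS.2
  · intro S hS
    simp only [coe_filter, mem_domSetsOfCard, Set.mem_ofPred_eq] at hS ⊢
    exact ⟨⟨hS.1.1.map e, by rw [card_map, hS.1.2]⟩, mem_map_of_mem _ hS.2⟩
  · intro S _
    simp [Finset.map_map]
  · intro S _
    simp [Finset.map_map]

theorem card_domSetsOfCard_mul [Fintype V] [DecidableEq V] {G : SimpleGraph V}
    (htrans : ∀ a b : V, ∃ e : G ≃g G, e a = b) (c : ℕ) (a : V) :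
    #(domSetsOfCard G c) * c = Fintype.card V * #{S ∈ domSetsOfCard G c | a ∈ S} := by
  refine card_mul_eq_card_mul (fun S v => v ∈ S) (t := univ) ?_ ?_
  · intro S hS
    simp [bipartiteAbove, (mem_domSetsOfCard.mp hS).2]
  · intro b _
    obtain ⟨e, rfl⟩ := htrans a b
    exact card_filter_mem_domSetsOfCard_of_iso e c a

end Domination

def DominatesPathInterior (N : ℕ) (A : Finset ℕ) : Prop :=
  ∀ v, 0 < v → v < N → ∃ w ∈ A, v ≤ w + 1 ∧ w ≤ v + 1

theorem lt_card_filter_range_iff {P : ℕ → Prop} [DecidablePred P] {N : ℕ}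
    (hP : ∀ m, m + 1 < N → P (m + 1) → P m) {m : ℕ} (hm : m < N) :
    m < #{i ∈ range N | P i} ↔ P m := by
  have hdown : ∀ i j, i ≤ j → j < N → P j → P i := by
    intro i j hij
    induction j, hij using Nat.le_induction with
    | base => exact fun _ h => h
    | succ j _ ih => exact fun hj h => ih (by omega) (hP j hj h)
  constructor
  · intro hlt
    by_contra hPm
    have hsub : {i ∈ range N | P i} ⊆ range m := by
      intro i hi
      rw [mem_filter, mem_range] at hi
      rw [mem_range]
      by_contra hle
      exact hPm (hdown m i (by omega) hi.1 hi.2)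
    simpa using (card_le_card hsub).trans_lt' hlt
  · intro hPm
    have hsub : range (m + 1) ⊆ {i ∈ range N | P i} := by
      intro i hi
      rw [mem_range] at hi
      rw [mem_filter, mem_range]
      exact ⟨by omega, hdown i m (by omega) hm hPm⟩
    simpa using card_le_card hsub

/-- `gapSet k i j = {t₀ < ⋯ < tₖ}` with `t₀ = 0` whose cyclic gaps in `ℤ/(3k+1)` all equal `3`,
except that the gap after `tᵢ` and the gap after `tⱼ` are one shorter (the same gap shortened
twice if `i = j`). -/
def gapSet (k i j : ℕ) : Finset ℕ :=
  (range (k + 1)).image fun m =>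
    3 * m - (if i < m then 1 else 0) - (if j < m then 1 else 0)

theorem gapSet_comm (k i j : ℕ) : gapSet k i j = gapSet k j i := by
  simp only [gapSet, Nat.sub_right_comm]

section gapSet

variable {k i j : ℕ}

theorem mem_gapSet {x : ℕ} :
    x ∈ gapSet k i j ↔
      ∃ m ≤ k, 3 * m - (if i < m then 1 else 0) - (if j < m then 1 else 0) = x := by
  simp [gapSet]

theorem card_gapSet : #(gapSet k i j) = k + 1 := by
  rw [gapSet, card_image_of_injective, card_range]
  intro a b h
  dsimp only at h
  split_ifs at h <;> omega

theorem zero_mem_gapSet : 0 ∈ gapSet k i j :=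
  mem_gapSet.mpr ⟨0, Nat.zero_le k, by simp⟩

theorem gapSet_subset_range : gapSet k i j ⊆ range (3 * k + 1) := by
  intro x hx
  obtain ⟨m, hm, rfl⟩ := mem_gapSet.mp hx
  rw [mem_range]
  omega

theorem three_mul_add_three_mem_gapSet {m : ℕ} (hm : m < k) :
    3 * m + 3 ∈ gapSet k i j ↔ m < i ∧ m < j := by
  rw [mem_gapSet]
  constructor
  · rintro ⟨m', -, h⟩
    split_ifs at h <;> omega
  · intro h
    exact ⟨m + 1, hm, by split_ifs <;> omega⟩

theorem three_mul_add_one_mem_gapSet {m : ℕ} (hm : m < k) :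
    3 * m + 1 ∈ gapSet k i j ↔ i ≤ m ∧ j ≤ m := by
  rw [mem_gapSet]
  constructor
  · rintro ⟨m', -, h⟩
    split_ifs at h <;> omega
  · intro h
    exact ⟨m + 1, hm, by split_ifs <;> omega⟩

theorem dominatesPathInterior_gapSet : DominatesPathInterior (3 * k) (gapSet k i j) := by
  intro v hv0 hvk
  simp only [mem_gapSet]
  by_cases h : 3 * (v / 3 + 1) - (if i < v / 3 + 1 then 1 else 0) -
      (if j < v / 3 + 1 then 1 else 0) ≤ v + 1
  · exact ⟨_, ⟨v / 3 + 1, by omega, rfl⟩, by split_ifs <;> omega, h⟩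
  · split_ifs at h <;> exact ⟨_, ⟨v / 3, by omega, rfl⟩, by split_ifs <;> omega⟩

theorem gapSet_injOn :
    Set.InjOn (Sym2.lift ⟨gapSet k, gapSet_comm k⟩) (range (k + 1)).sym2 := by
  intro z hz z' hz' h
  induction z using Sym2.ind with | _ i j => ?_
  induction z' using Sym2.ind with | _ i' j' => ?_
  simp only [mem_coe, mk_mem_sym2_iff, mem_range, Sym2.lift_mk] at hz hz' h
  have hmin : ∀ m < k, m < min i j ↔ m < min i' j' := fun m hm => by
    have := congrArg (3 * m + 3 ∈ ·) h
    simp only [three_mul_add_three_mem_gapSet hm, eq_iff_iff] at this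
    omega
  have hmax : ∀ m < k, max i j ≤ m ↔ max i' j' ≤ m := fun m hm => by
    have := congrArg (3 * m + 1 ∈ ·) h
    simp only [three_mul_add_one_mem_gapSet hm, eq_iff_iff] at this
    omega
  have hmin' : min i j = min i' j' := by
    rcases lt_trichotomy (min i j) (min i' j') with hlt | heq | hlt
    · have := hmin (min i j) (by omega); omega
    · exact heq
    · have := hmin (min i' j') (by omega); omega
  have hmax' : max i j = max i' j' := by
    rcases lt_trichotomy (max i j) (max i' j') with hlt | heq | hlt
    · have := hmax (max i j) (by omega); omega
    · exact heq
    · have := hmax (max i' j') (by omega); omega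
  rw [Sym2.eq_iff]
  omega

theorem DominatesPathInterior.eq_gapSet {A : Finset ℕ}
    (hdom : DominatesPathInterior (3 * k) A) (h0 : 0 ∈ A) (hcard : #A = k + 1) :
    A = gapSet k #{m ∈ range k | 3 * m + 3 ∈ A} #{m ∈ range k | 3 * m + 1 ∉ A} := by
  have hblock : ∀ m < k, 3 * m + 1 ∈ A ∨ 3 * m + 2 ∈ A ∨ 3 * m + 3 ∈ A := by
    intro m hm
    obtain ⟨w, hw, h1, h2⟩ := hdom (3 * m + 2) (by omega) (by omega)
    obtain rfl | rfl | rfl : w = 3 * m + 1 ∨ w = 3 * m + 2 ∨ w = 3 * m + 3 := by omega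
    all_goals tauto
  -- `A` meets each block `{3m+1, 3m+2, 3m+3}`, so by counting it meets each in exactly one point.
  have hunique : ∀ x ∈ A, ∀ y ∈ A, (x + 2) / 3 = (y + 2) / 3 → x = y := by
    refine injOn_of_card_image_eq (le_antisymm card_image_le ?_)
    rw [hcard, ← card_range (k + 1)]
    refine card_le_card fun m hm => mem_image.mpr ?_
    rcases m with _ | m
    · exact ⟨0, h0, rfl⟩
    · have hm : m < k := by simpa using hm
      rcases hblock m hm with h | h | h <;> exact ⟨_, h, by omega⟩
  have hthree : ∀ m < k, 3 * m + 3 ∈ A ↔ m < #{m ∈ range k | 3 * m + 3 ∈ A} := by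
    refine fun m hm =>
      (lt_card_filter_range_iff (P := (3 * · + 3 ∈ A)) (fun m hm h => ?_) hm).symm
    obtain ⟨w, hw, h1, h2⟩ := hdom (3 * m + 4) (by omega) (by omega)
    obtain rfl | h' : w = 3 * m + 3 ∨ (w + 2) / 3 = (3 * (m + 1) + 3 + 2) / 3 := by omega
    · exact hw
    · have := hunique _ hw _ h h'
      omega
  have hone : ∀ m < k, 3 * m + 1 ∉ A ↔ m < #{m ∈ range k | 3 * m + 1 ∉ A} := by
    refine fun m hm =>
      (lt_card_filter_range_iff (P := (3 * · + 1 ∉ A)) (fun m hm h hA1 => h ?_) hm).symm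
    obtain ⟨w, hw, h1, h2⟩ := hdom (3 * m + 3) (by omega) (by omega)
    obtain rfl | h' : w = 3 * (m + 1) + 1 ∨ (w + 2) / 3 = (3 * m + 1 + 2) / 3 := by omega
    · exact hw
    · have := hunique _ hw _ hA1 h'
      omega
  set p := #{m ∈ range k | 3 * m + 3 ∈ A}
  set q := #{m ∈ range k | 3 * m + 1 ∉ A}
  symm
  refine eq_of_subset_of_card_le (fun x hx => ?_) (by rw [hcard, card_gapSet])
  obtain ⟨_ | m, hm, rfl⟩ := mem_gapSet.mp hx
  · simpa using h0
  have h3 := hthree m (by omega)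
  have h1 := hone m (by omega)
  rcases hblock m (by omega) with h | h | h
  · have hp : p ≤ m :=
      not_lt.mp fun hp => absurd (hunique _ h _ (h3.mpr hp) (by omega)) (by omega)
    have hq : q ≤ m := not_lt.mp fun hq => h1.mpr hq h
    convert h using 1
    split_ifs <;> omega
  · have hp : p ≤ m :=
      not_lt.mp fun hp => absurd (hunique _ h _ (h3.mpr hp) (by omega)) (by omega)
    have hq : m < q := h1.mp fun h' => absurd (hunique _ h _ h' (by omega)) (by omega)
    convert h using 1
    split_ifs <;> omega
  · have hp : m < p := h3.mp h
    have hq : m < q := h1.mp fun h' => absurd (hunique _ h _ h' (by omega)) (by omega)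
    convert h using 1
    split_ifs <;> omega

end gapSet

theorem cycleGraph_adj_iff_val {n : ℕ} {u v : Fin n} :
    (cycleGraph n).Adj u v ↔ u.val = v.val + 1 ∨ v.val = u.val + 1 ∨
      1 < n ∧ (u.val + n = v.val + 1 ∨ v.val + n = u.val + 1) := by
  have hu := u.isLt
  have hv := v.isLt
  rw [cycleGraph_adj']
  rcases lt_trichotomy u v with h | rfl | h
  · rw [Fin.coe_sub_iff_lt.mpr h, Fin.coe_sub_iff_le.mpr h.le]
    rw [Fin.lt_def] at h
    omega
  · rw [Fin.coe_sub_iff_le.mpr le_rfl]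
    omega
  · rw [Fin.coe_sub_iff_le.mpr h.le, Fin.coe_sub_iff_lt.mpr h]
    rw [Fin.lt_def] at h
    omega

theorem cycleGraph_degree_le_two : ∀ {n : ℕ} (v : Fin n), (cycleGraph n).degree v ≤ 2
  | 0, v => v.elim0
  | 1, v => by simp [cycleGraph_one_eq_bot]
  | _ + 2, _ => by rw [cycleGraph_degree_two_le]; exact card_le_two

theorem cycleGraph_exists_iso_apply_eq {n : ℕ} [NeZero n] (a b : Fin n) :
    ∃ e : cycleGraph n ≃g cycleGraph n, e a = b :=
  ⟨{ toEquiv := Equiv.addLeft (b - a), map_rel_iff' := by simp [cycleGraph_adj'] }, by simp⟩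

theorem domSet_cycleGraph_iff_of_zero_mem {n : ℕ} {S : Finset (Fin (n + 1))} (h0 : 0 ∈ S) :
    domSet (cycleGraph (n + 1)) S ↔ DominatesPathInterior n (S.map Fin.valEmbedding) := by
  simp only [DominatesPathInterior, mem_map, Fin.valEmbedding_apply, exists_exists_and_eq_and]
  constructor
  · intro h v hv0 hvn
    by_cases hv : (⟨v, by omega⟩ : Fin (n + 1)) ∈ S
    · exact ⟨_, hv, by simp⟩
    · obtain ⟨u, hu, hadj⟩ := h _ hv
      rw [cycleGraph_adj_iff_val] at hadj
      dsimp only at hadj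
      exact ⟨u, hu, by omega⟩
  · intro h x hx
    have hx0 : x.val ≠ 0 := fun h' => hx ((Fin.ext h' : x = 0) ▸ h0)
    by_cases hxn : x.val = n
    · exact ⟨0, h0, cycleGraph_adj_iff_val.mpr (by simp only [Fin.val_zero]; omega)⟩
    · obtain ⟨u, hu, hux⟩ := h x.val (by omega) (by omega)
      have hne : u.val ≠ x.val := fun h' => hx (Fin.ext h' ▸ hu)
      exact ⟨u, hu, cycleGraph_adj_iff_val.mpr (by omega)⟩

section CycleGraphCount

variable (k : ℕ)

theorem image_map_valEmbedding_filter_zero_mem_domSetsOfCard_cycleGraph :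
    {S ∈ domSetsOfCard (cycleGraph (3 * k + 1)) (k + 1) | 0 ∈ S}.image (map Fin.valEmbedding) =
      (range (k + 1)).sym2.image (Sym2.lift ⟨gapSet k, gapSet_comm k⟩) := by
  ext A
  simp only [mem_image, mem_filter, mem_domSetsOfCard]
  constructor
  · rintro ⟨S, ⟨⟨hdom, hcard⟩, h0⟩, rfl⟩
    have hA := ((domSet_cycleGraph_iff_of_zero_mem h0).mp hdom).eq_gapSet (mem_map_of_mem _ h0)
      (by rw [card_map, hcard])
    refine ⟨s(_, _), mk_mem_sym2_iff.mpr ⟨?_, ?_⟩, hA.symm⟩ <;>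
      exact mem_range.mpr (Nat.lt_succ_of_le ((card_filter_le _ _).trans (card_range k).le))
  · rintro ⟨z, hz, rfl⟩
    induction z using Sym2.ind with | _ i j => ?_
    have hlt : ∀ m ∈ gapSet k i j, m < 3 * k + 1 := fun m hm =>
      mem_range.mp (gapSet_subset_range hm)
    refine ⟨(gapSet k i j).attachFin hlt, ⟨⟨?_, by simp [card_gapSet]⟩, ?_⟩, by simp⟩
    · rw [domSet_cycleGraph_iff_of_zero_mem (by simp [zero_mem_gapSet]),
        map_valEmbedding_attachFin]
      exact dominatesPathInterior_gapSet
    · simp [zero_mem_gapSet]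

theorem card_filter_zero_mem_domSetsOfCard_cycleGraph :
    #{S ∈ domSetsOfCard (cycleGraph (3 * k + 1)) (k + 1) | 0 ∈ S} = (k + 2).choose 2 := by
  rw [← card_image_of_injective _ (Finset.map_injective Fin.valEmbedding),
    image_map_valEmbedding_filter_zero_mem_domSetsOfCard_cycleGraph,
    card_image_of_injOn gapSet_injOn, card_sym2, card_range]

theorem domNum_cycleGraph_s12 : domNum (cycleGraph (3 * k + 1)) = k + 1 := by
  refine IsLeast.csInf_eq ⟨?_, ?_⟩
  · obtain ⟨S, hS⟩ :
        {S ∈ domSetsOfCard (cycleGraph (3 * k + 1)) (k + 1) | 0 ∈ S}.Nonempty := by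
      rw [← card_pos, card_filter_zero_mem_domSetsOfCard_cycleGraph]
      exact Nat.choose_pos (by omega)
    exact ⟨S, mem_domSetsOfCard.mp (mem_filter.mp hS).1⟩
  · rintro c ⟨S, hS, rfl⟩
    have := card_le_mul_card_of_domSet cycleGraph_degree_le_two hS
    rw [Fintype.card_fin] at this
    omega

theorem dominion_cycleGraph_mul_two :
    dominion (cycleGraph (3 * k + 1)) * 2 = (3 * k + 1) * (k + 2) := by
  have h := card_domSetsOfCard_mul cycleGraph_exists_iso_apply_eq (k + 1) (0 : Fin (3 * k + 1))
  rw [card_filter_zero_mem_domSetsOfCard_cycleGraph, Fintype.card_fin] at h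
  have hchoose : (k + 2).choose 2 * 2 = (k + 2) * (k + 1) := by
    rw [← Nat.add_one_mul_choose_eq, Nat.choose_one_right]
  rw [dominion_eq_card_domSetsOfCard, domNum_cycleGraph_s12]
  set D := #(domSetsOfCard (cycleGraph (3 * k + 1)) (k + 1))
  refine Nat.eq_of_mul_eq_mul_right (by omega : 0 < k + 1) ?_
  calc D * 2 * (k + 1) = D * (k + 1) * 2 := by ring
    _ = (3 * k + 1) * (k + 2) * (k + 1) := by rw [h, mul_assoc, hchoose]; ring

end CycleGraphCount

theorem stmt12_general (n : ℕ) (hmod : n % 3 = 1) :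
    dominion (cycleGraph n) = (n ^ 2 + 5 * n) / 6 := by
  obtain ⟨k, rfl⟩ : ∃ k, n = 3 * k + 1 := ⟨n / 3, by omega⟩
  have h := dominion_cycleGraph_mul_two k
  refine (Nat.div_eq_of_eq_mul_left (by norm_num) ?_).symm
  calc (3 * k + 1) ^ 2 + 5 * (3 * k + 1) = 3 * ((3 * k + 1) * (k + 2)) := by ring
    _ = dominion (cycleGraph (3 * k + 1)) * 6 := by rw [← h]; ring

theorem stmt12 (n : ℕ) (hn : 4 ≤ n) (hmod : n % 3 = 1) :
    dominion (cycleGraph n) = (n ^ 2 + 5 * n) / 6 :=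
  stmt12_general n hmod
end

section
/- If G_1 and G_2 are connected graphs with 2 ≤ γ(G_1) ≤ γ(G_2), then ζ(G_1 ∨ G_2) ≥ |V(G_1)| · |V(G_2)|, where G_1 ∨ G_2 is the join. -/
open Finset SimpleGraph
open scoped Classical

/-- The join `G₁ ∨ G₂`: disjoint union with all edges between the two vertex sets added. -/
def joinG {V₁ V₂ : Type*} (G₁ : SimpleGraph V₁) (G₂ : SimpleGraph V₂) :
    SimpleGraph (V₁ ⊕ V₂) :=
  SimpleGraph.fromRel (fun a b =>
    (∃ x y, a = Sum.inl x ∧ b = Sum.inl y ∧ G₁.Adj x y) ∨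
    (∃ x y, a = Sum.inr x ∧ b = Sum.inr y ∧ G₂.Adj x y) ∨
    (a.isLeft ∧ b.isRight))

lemma join_adj_lr {V₁ V₂ : Type*} (G₁ : SimpleGraph V₁) (G₂ : SimpleGraph V₂)
    (x : V₁) (y : V₂) : (joinG G₁ G₂).Adj (Sum.inl x) (Sum.inr y) := by
  refine ⟨by simp, Or.inl (Or.inr (Or.inr (by simp)))⟩

lemma join_adj_ll {V₁ V₂ : Type*} {G₁ : SimpleGraph V₁} {G₂ : SimpleGraph V₂}
    {x y : V₁} (h : (joinG G₁ G₂).Adj (Sum.inl x) (Sum.inl y)) : G₁.Adj x y := by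
  obtain ⟨hne, h | h⟩ := h <;>
    rcases h with ⟨p, q, hp, hq, ha⟩ | ⟨p, q, hp, hq, ha⟩ | ⟨hl, hr⟩ <;> simp_all
  exact ha.symm

lemma join_adj_rr {V₁ V₂ : Type*} {G₁ : SimpleGraph V₁} {G₂ : SimpleGraph V₂}
    {x y : V₂} (h : (joinG G₁ G₂).Adj (Sum.inr x) (Sum.inr y)) : G₂.Adj x y := by
  obtain ⟨hne, h | h⟩ := h <;>
    rcases h with ⟨p, q, hp, hq, ha⟩ | ⟨p, q, hp, hq, ha⟩ | ⟨hl, hr⟩ <;> simp_all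
  exact ha.symm

lemma pair_dom {V₁ V₂ : Type*} (G₁ : SimpleGraph V₁) (G₂ : SimpleGraph V₂)
    (x : V₁) (y : V₂) :
    domSet (joinG G₁ G₂) ({(Sum.inl x : V₁ ⊕ V₂), Sum.inr y} : Finset (V₁ ⊕ V₂)) := by
  intro v hv
  rcases v with a | b
  · exact ⟨Sum.inr y, by simp, (join_adj_lr G₁ G₂ a y).symm⟩
  · exact ⟨Sum.inl x, by simp, join_adj_lr G₁ G₂ x b⟩

theorem stmt15 {V₁ V₂ : Type*} [Fintype V₁] [Fintype V₂]
    (G₁ : SimpleGraph V₁) (G₂ : SimpleGraph V₂)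
    (h₁ : G₁.Connected) (h₂ : G₂.Connected)
    (hγ₁ : 2 ≤ domNum G₁) (hγ : domNum G₁ ≤ domNum G₂) :
    Fintype.card V₁ * Fintype.card V₂ ≤ dominion (joinG G₁ G₂) := by
  have hγ₂ : 2 ≤ domNum G₂ := le_trans hγ₁ hγ
  obtain ⟨x₀⟩ := h₁.nonempty
  obtain ⟨y₀⟩ := h₂.nonempty
  have hcard : ∀ (x : V₁) (y : V₂),
      ({(Sum.inl x : V₁ ⊕ V₂), Sum.inr y} : Finset (V₁ ⊕ V₂)).card = 2 := by
    intro x y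
    rw [Finset.card_insert_of_notMem (by simp), Finset.card_singleton]
  have hle : domNum (joinG G₁ G₂) ≤ 2 :=
    Nat.sInf_le ⟨({(Sum.inl x₀ : V₁ ⊕ V₂), Sum.inr y₀} : Finset (V₁ ⊕ V₂)),
      pair_dom G₁ G₂ x₀ y₀, hcard x₀ y₀⟩
  have hge : 2 ≤ domNum (joinG G₁ G₂) := by
    refine le_csInf ⟨2, ({(Sum.inl x₀ : V₁ ⊕ V₂), Sum.inr y₀} : Finset (V₁ ⊕ V₂)),
      pair_dom G₁ G₂ x₀ y₀, hcard x₀ y₀⟩ ?_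
    rintro k ⟨S, hS, rfl⟩
    by_contra hlt
    push_neg at hlt
    interval_cases h : S.card
    · rw [Finset.card_eq_zero] at h
      subst h
      obtain ⟨u, hu, _⟩ := hS (Sum.inl x₀) (by simp)
      simp at hu
    · rw [Finset.card_eq_one] at h
      obtain ⟨s, rfl⟩ := h
      rcases s with a | b
      · have hd : domSet G₁ {a} := by
          intro v hv
          have hv' : (Sum.inl v : V₁ ⊕ V₂) ∉ ({(Sum.inl a : V₁ ⊕ V₂)} : Finset (V₁ ⊕ V₂)) := by
            simp only [Finset.mem_singleton] at hv ⊢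
            exact fun h => hv (Sum.inl.inj h)
          obtain ⟨u, hu, hadj⟩ := hS (Sum.inl v) hv'
          simp only [Finset.mem_singleton] at hu
          subst hu
          show ∃ u ∈ ({a} : Finset V₁), G₁.Adj u v
          refine ⟨a, ?_, ?_⟩
          · exact Finset.mem_singleton_self a
          · exact join_adj_ll hadj
        have : domNum G₁ ≤ 1 := Nat.sInf_le ⟨({a} : Finset V₁), hd, Finset.card_singleton a⟩
        omega
      · have hd : domSet G₂ {b} := by
          intro v hv
          have hv' : (Sum.inr v : V₁ ⊕ V₂) ∉ ({(Sum.inr b : V₁ ⊕ V₂)} : Finset (V₁ ⊕ V₂)) := by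
            simp only [Finset.mem_singleton] at hv ⊢
            exact fun h => hv (Sum.inr.inj h)
          obtain ⟨u, hu, hadj⟩ := hS (Sum.inr v) hv'
          simp only [Finset.mem_singleton] at hu
          subst hu
          show ∃ u ∈ ({b} : Finset V₂), G₂.Adj u v
          exact ⟨b, Finset.mem_singleton_self b, join_adj_rr hadj⟩
        have : domNum G₂ ≤ 1 := Nat.sInf_le ⟨({b} : Finset V₂), hd, Finset.card_singleton b⟩
        omega
  have hnum : domNum (joinG G₁ G₂) = 2 := le_antisymm hle hge
  have hinj : Function.Injective (fun p : V₁ × V₂ =>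
      (⟨({(Sum.inl p.1 : V₁ ⊕ V₂), Sum.inr p.2} : Finset (V₁ ⊕ V₂)), pair_dom G₁ G₂ p.1 p.2,
        by rw [hnum]; exact hcard p.1 p.2⟩ :
        {S : Finset (V₁ ⊕ V₂) // domSet (joinG G₁ G₂) S ∧
          S.card = domNum (joinG G₁ G₂)})) := by
    rintro ⟨x, y⟩ ⟨x', y'⟩ h
    simp only [Subtype.mk.injEq, Finset.ext_iff] at h
    have h1 := (h (Sum.inl x)).mp (by simp)
    have h2 := (h (Sum.inr y)).mp (by simp)
    simp_all
  calc Fintype.card V₁ * Fintype.card V₂ = Nat.card (V₁ × V₂) := by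
        simp [Nat.card_eq_fintype_card]
    _ ≤ _ := Nat.card_le_card_of_injective _ hinj
end
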